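/- arXiv:1909.12676 — 2 statements merged into one kernel-verified Lean document; each statement's English description precedes it below -/
import Mathlib

section
/- Let d ≥ 1 and ε ∈ (0,1]. If a nonzero matrix A ∈ ℝ^{d×d} satisfies the Cordes condition with parameter ε, then ‖γ·A − I_d‖_F ≤ √(1−ε), where I_d denotes the d×d identity matrix and γ := tr A / ‖A‖_F². (This is the pointwise form of Lemma 2.1 of the paper; the almost-everywhere statement for a coefficient field A ∈ L∞(Ω; ℝ^{d×d}) follows by applying it at almost every point.) -/
open Matrix

/-- Frobenius inner product of two `d × d` real matrices. -/
noncomputable def frobInner {d : ℕ} (A B : Matrix (Fin d) (Fin d) ℝ) : ℝ :=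
  ∑ i, ∑ j, A i j * B i j

/-- Frobenius norm of a `d × d` real matrix. -/
noncomputable def frobNorm {d : ℕ} (A : Matrix (Fin d) (Fin d) ℝ) : ℝ :=
  Real.sqrt (frobInner A A)

/-- The Cordes condition with parameter `ε`. -/
def CordesCond {d : ℕ} (ε : ℝ) (A : Matrix (Fin d) (Fin d) ℝ) : Prop :=
  ((d : ℝ) - 1 + ε) * frobNorm A ^ 2 ≤ trace A ^ 2

lemma frobInner_self_nonneg {d : ℕ} (A : Matrix (Fin d) (Fin d) ℝ) :
    0 ≤ frobInner A A := by
  unfold frobInner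
  refine Finset.sum_nonneg fun i _ => Finset.sum_nonneg fun j _ => mul_self_nonneg _

lemma frobInner_self_pos {d : ℕ} (A : Matrix (Fin d) (Fin d) ℝ) (hA : A ≠ 0) :
    0 < frobInner A A := by
  rcases (frobInner_self_nonneg A).lt_or_eq with h | h
  · exact h
  · exfalso; apply hA
    ext i j
    have h1 : ∀ i ∈ Finset.univ, (0:ℝ) ≤ ∑ j, A i j * A i j :=
      fun i _ => Finset.sum_nonneg fun j _ => mul_self_nonneg _
    have h2 := (Finset.sum_eq_zero_iff_of_nonneg h1).mp h.symm i (Finset.mem_univ i)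
    have h3 : ∀ j ∈ Finset.univ, (0:ℝ) ≤ A i j * A i j :=
      fun j _ => mul_self_nonneg _
    have h4 := (Finset.sum_eq_zero_iff_of_nonneg h3).mp h2 j (Finset.mem_univ j)
    have := mul_self_eq_zero.mp h4
    simpa using this

lemma frobInner_expand {d : ℕ} (A : Matrix (Fin d) (Fin d) ℝ) (c : ℝ) :
    frobInner (c • A - 1) (c • A - 1)
      = c ^ 2 * frobInner A A - 2 * c * trace A + d := by
  unfold frobInner
  have key : ∀ i : Fin d, ∑ j, (c • A - 1) i j * (c • A - 1) i j
      = c ^ 2 * (∑ j, A i j * A i j) - 2 * c * A i i + 1 := by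
    intro i
    have : ∀ j : Fin d, (c • A - 1) i j * (c • A - 1) i j
        = c ^ 2 * (A i j * A i j) - 2 * c * (A i j * (1 : Matrix (Fin d) (Fin d) ℝ) i j)
          + (1 : Matrix (Fin d) (Fin d) ℝ) i j := by
      intro j
      simp only [Matrix.sub_apply, Matrix.smul_apply, smul_eq_mul, Matrix.one_apply]
      by_cases h : i = j <;> simp [h] <;> ring
    simp only [this, Finset.sum_add_distrib, Finset.sum_sub_distrib, ← Finset.mul_sum]
    simp [Matrix.one_apply]
  simp only [key, Finset.sum_add_distrib, Finset.sum_sub_distrib, ← Finset.mul_sum]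
  simp [Matrix.trace, Matrix.diag, Finset.mul_sum]

theorem cordes_frobNorm_sub_one_le {d : ℕ} (hd : 1 ≤ d) {ε : ℝ}
    (hε0 : 0 < ε) (hε1 : ε ≤ 1)
    (A : Matrix (Fin d) (Fin d) ℝ) (hA : A ≠ 0) (hC : CordesCond ε A) :
    frobNorm ((trace A / frobNorm A ^ 2) • A - 1) ≤ Real.sqrt (1 - ε) := by
  set N := frobInner A A with hNdef
  have hN : 0 < N := frobInner_self_pos A hA
  have hfn : frobNorm A ^ 2 = N := Real.sq_sqrt hN.le
  set t := trace A with htdef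
  have hC' : ((d : ℝ) - 1 + ε) * N ≤ t ^ 2 := by
    unfold CordesCond at hC; rwa [hfn] at hC
  rw [hfn]
  unfold frobNorm
  apply Real.sqrt_le_sqrt
  rw [frobInner_expand A (t / N)]
  have hexp : (t / N) ^ 2 * N - 2 * (t / N) * t + d = (d : ℝ) - t ^ 2 / N := by
    field_simp; ring
  rw [← hNdef, hexp]
  have : (d : ℝ) - 1 + ε ≤ t ^ 2 / N := (le_div_iff₀ hN).mpr hC'
  linarith
end

section
/- Let d ≥ 1 and ε ∈ (0,1]. If a nonzero matrix A ∈ ℝ^{d×d} satisfies the Cordes condition with parameter ε and γ := tr A / ‖A‖_F², then for every matrix M ∈ ℝ^{d×d} one has |γ·(A:M) − tr M| ≤ √(1−ε)·‖M‖_F. (This is the pointwise linearization estimate, obtained from Lemma 2.1 together with the Cauchy–Schwarz inequality for the Frobenius inner product, which underlies the coercivity and boundedness arguments in Lemma 2.2 and Lemma 3.6.) -/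
open Matrix

lemma frobInner_prod {d : ℕ} (A B : Matrix (Fin d) (Fin d) ℝ) :
    frobInner A B = ∑ p : Fin d × Fin d, A p.1 p.2 * B p.1 p.2 := by
  rw [frobInner, ← Finset.sum_product']; rfl

lemma frobNorm_sq {d : ℕ} (A : Matrix (Fin d) (Fin d) ℝ) :
    frobNorm A ^ 2 = frobInner A A :=
  Real.sq_sqrt (frobInner_self_nonneg A)

lemma frobInner_cs {d : ℕ} (A B : Matrix (Fin d) (Fin d) ℝ) :
    |frobInner A B| ≤ frobNorm A * frobNorm B := by
  have h := Finset.sum_mul_sq_le_sq_mul_sq Finset.univ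
    (fun p : Fin d × Fin d => A p.1 p.2) (fun p => B p.1 p.2)
  rw [← frobInner_prod] at h
  have hA : ∑ p : Fin d × Fin d, A p.1 p.2 ^ 2 = frobInner A A := by
    rw [frobInner_prod]; simp [sq]
  have hB : ∑ p : Fin d × Fin d, B p.1 p.2 ^ 2 = frobInner B B := by
    rw [frobInner_prod]; simp [sq]
  rw [hA, hB] at h
  calc |frobInner A B| = Real.sqrt ((frobInner A B) ^ 2) := (Real.sqrt_sq_eq_abs _).symm
    _ ≤ Real.sqrt (frobInner A A * frobInner B B) := Real.sqrt_le_sqrt h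
    _ = frobNorm A * frobNorm B := Real.sqrt_mul (frobInner_self_nonneg A) _

lemma frobInner_one_left {d : ℕ} (M : Matrix (Fin d) (Fin d) ℝ) :
    frobInner 1 M = trace M := by
  simp [frobInner, trace, Matrix.diag, Matrix.one_apply]

lemma frobInner_smul_sub_one {d : ℕ} (c : ℝ) (A M : Matrix (Fin d) (Fin d) ℝ) :
    frobInner (c • A - 1) M = c * frobInner A M - trace M := by
  have := frobInner_one_left M
  simp only [frobInner, Matrix.sub_apply, Matrix.smul_apply, smul_eq_mul, sub_mul,
    Finset.sum_sub_distrib, Finset.mul_sum, mul_assoc] at *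
  rw [this]

theorem cordes_linearization_estimate {d : ℕ} (hd : 1 ≤ d) {ε : ℝ}
    (hε0 : 0 < ε) (hε1 : ε ≤ 1)
    (A : Matrix (Fin d) (Fin d) ℝ) (hA : A ≠ 0) (hC : CordesCond ε A)
    (M : Matrix (Fin d) (Fin d) ℝ) :
    |(trace A / frobNorm A ^ 2) * frobInner A M - trace M|
      ≤ Real.sqrt (1 - ε) * frobNorm M := by
  set γ : ℝ := trace A / frobNorm A ^ 2 with hγ
  set B : Matrix (Fin d) (Fin d) ℝ := γ • A - 1 with hB
  -- positivity of frobInner A A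
  have hAA : 0 < frobInner A A := by
    rcases (frobInner_self_nonneg A).lt_or_eq with h | h
    · exact h
    · exfalso; apply hA
      have hz : ∀ p : Fin d × Fin d, A p.1 p.2 * A p.1 p.2 = 0 := by
        intro p
        have := Finset.sum_eq_zero_iff_of_nonneg
          (fun (q : Fin d × Fin d) (_ : q ∈ Finset.univ) => mul_self_nonneg (A q.1 q.2))
        rw [← frobInner_prod, ← h] at this
        exact (this.mp rfl) p (Finset.mem_univ p)
      ext i j
      have := hz (i, j)
      simpa [mul_self_eq_zero] using this
  have hN2 : frobNorm A ^ 2 = frobInner A A := frobNorm_sq A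
  have hN2pos : 0 < frobNorm A ^ 2 := hN2 ▸ hAA
  -- frobInner A 1 = trace A (symmetric)
  have hA1 : frobInner A 1 = trace A := by
    have : frobInner A 1 = frobInner 1 A := by
      simp [frobInner, Matrix.one_apply, mul_comm]
    rw [this, frobInner_one_left]
  -- compute frobInner B B
  have hBB : frobInner B B = γ ^ 2 * frobInner A A - 2 * γ * trace A + d := by
    rw [hB, frobInner_smul_sub_one]
    have hcomm : frobInner A (γ • A - 1) = frobInner (γ • A - 1) A := by
      simp only [frobInner, mul_comm]
    have h1 : frobInner A (γ • A - 1) = γ * frobInner A A - trace A := by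
      rw [hcomm, frobInner_smul_sub_one]
    have htr : trace (γ • A - 1) = γ * trace A - d := by
      simp [trace_smul, trace_sub, trace_one, smul_eq_mul]
    rw [h1, htr]; ring
  have hBBval : frobInner B B ≤ 1 - ε := by
    rw [hBB, hγ, hN2]
    have hA2 : trace A ^ 2 / frobInner A A ≥ (d : ℝ) - 1 + ε := by
      rw [ge_iff_le, le_div_iff₀ hAA]
      have hC' := hC
      rw [CordesCond, hN2] at hC'
      exact hC'
    have : (trace A / frobInner A A) ^ 2 * frobInner A A
        - 2 * (trace A / frobInner A A) * trace A + d
        = (d : ℝ) - trace A ^ 2 / frobInner A A := by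
      field_simp; ring
    rw [this]
    linarith
  -- conclude
  have key : γ * frobInner A M - trace M = frobInner B M := by
    rw [hB, frobInner_smul_sub_one]
  rw [key]
  calc |frobInner B M| ≤ frobNorm B * frobNorm M := frobInner_cs B M
    _ ≤ Real.sqrt (1 - ε) * frobNorm M := by
        apply mul_le_mul_of_nonneg_right _ (Real.sqrt_nonneg _)
        exact Real.sqrt_le_sqrt hBBval
end
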